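/- Let V be a finite-dimensional real vector space and c ⊆ V a properly convex open cone. For any subset X ⊆ V, the causally convex hull of X (the smallest causally convex set containing X) equals the union of all closed diamonds D^c(x,y) = (x + closure(c)) ∩ (y − closure(c)) over pairs x, y ∈ X with y ∈ x + closure(c), together with X itself. In particular, if X is connected then its causally convex hull is connected. -/

import Mathlib

/-!
Write `x ≤ y` for `y - x ∈ closure c`. Since `closure c` is a convex cone, this relation is
transitive, and a union of diamonds `[x, y]` with endpoints in `X` is causally convex: a point
between two points of it lies above some point of `X` and below some point of `X`. For
connectedness, each nonempty diamond `[a, b]` is convex and contains its lower endpoint `a ∈ X`,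
because a nonempty closed cone contains `0`.
-/

open Set

section AddCommGroup

variable {V : Type*} [AddCommGroup V]

def causalDiamond (K : Set V) (x y : V) : Set V :=
  {z | z - x ∈ K ∧ y - z ∈ K}

def IsCausallyConvex (K Y : Set V) : Prop :=
  ∀ x ∈ Y, ∀ y ∈ Y, y - x ∈ K → causalDiamond K x y ⊆ Y

def causallyConvexHull (K X : Set V) : Set V :=
  ⋂₀ {Y | X ⊆ Y ∧ IsCausallyConvex K Y}

def diamondUnion (K X : Set V) : Set V :=
  X ∪ {z | ∃ x ∈ X, ∃ y ∈ X, y - x ∈ K ∧ z ∈ causalDiamond K x y}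

variable {K X : Set V}

theorem subset_diamondUnion : X ⊆ diamondUnion K X :=
  subset_union_left

theorem diamondUnion_subset {Y : Set V} (hXY : X ⊆ Y) (hY : IsCausallyConvex K Y) :
    diamondUnion K X ⊆ Y := by
  rintro z (hz | ⟨x, hx, y, hy, hxy, hz⟩)
  · exact hXY hz
  · exact hY x (hXY hx) y (hXY hy) hxy hz

section AddClosed

variable (hK : ∀ u ∈ K, ∀ v ∈ K, u + v ∈ K)
include hK

theorem exists_mem_sub_mem_of_mem_diamondUnion {x z : V} (hx : x ∈ diamondUnion K X)
    (hxz : z - x ∈ K) : ∃ a ∈ X, z - a ∈ K := by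
  rcases hx with hx | ⟨a, ha, -, -, -, hxa, -⟩
  · exact ⟨x, hx, hxz⟩
  · exact ⟨a, ha, sub_add_sub_cancel z x a ▸ hK _ hxz _ hxa⟩

theorem exists_mem_mem_sub_of_mem_diamondUnion {y z : V} (hy : y ∈ diamondUnion K X)
    (hzy : y - z ∈ K) : ∃ b ∈ X, b - z ∈ K := by
  rcases hy with hy | ⟨-, -, b, hb, -, -, hby⟩
  · exact ⟨y, hy, hzy⟩
  · exact ⟨b, hb, sub_add_sub_cancel b y z ▸ hK _ hby _ hzy⟩

theorem isCausallyConvex_diamondUnion : IsCausallyConvex K (diamondUnion K X) := by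
  intro x hx y hy _ z hz
  obtain ⟨hxz, hzy⟩ := hz
  obtain ⟨a, ha, hza⟩ := exists_mem_sub_mem_of_mem_diamondUnion hK hx hxz
  obtain ⟨b, hb, hbz⟩ := exists_mem_mem_sub_of_mem_diamondUnion hK hy hzy
  exact Or.inr ⟨a, ha, b, hb, sub_add_sub_cancel b z a ▸ hK _ hbz _ hza, hza, hbz⟩

theorem causallyConvexHull_eq_diamondUnion : causallyConvexHull K X = diamondUnion K X := by
  refine subset_antisymm (sInter_subset_of_mem ?_) (subset_sInter fun _ hY ↦ ?_)
  · exact ⟨subset_diamondUnion, isCausallyConvex_diamondUnion hK⟩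
  · exact diamondUnion_subset hY.1 hY.2

end AddClosed

end AddCommGroup

section Real

variable {V : Type*} [AddCommGroup V] [Module ℝ V]

theorem Convex.causalDiamond {K : Set V} (hK : Convex ℝ K) (x y : V) :
    Convex ℝ (causalDiamond K x y) := by
  have hlower : Convex ℝ {z | z - x ∈ K} := by
    simp only [sub_eq_add_neg]
    exact hK.translate_preimage_left (-x)
  have hupper : Convex ℝ {z | y - z ∈ K} := by
    simp only [sub_eq_add_neg]
    exact (hK.translate_preimage_right y).neg
  exact hlower.inter hupper

variable [TopologicalSpace V] [IsTopologicalAddGroup V] [ContinuousSMul ℝ V]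

theorem IsConnected.diamondUnion {K : ConvexCone ℝ V} (hK : IsClosed (K : Set V)) {X : Set V}
    (hX : IsConnected X) : IsConnected (diamondUnion K X) := by
  obtain ⟨x₀, hx₀⟩ := hX.nonempty
  refine ⟨⟨x₀, subset_diamondUnion hx₀⟩, isPreconnected_of_forall x₀ ?_⟩
  rintro z (hz | ⟨a, ha, b, hb, hab, hz⟩)
  · exact ⟨X, subset_diamondUnion, hx₀, hz, hX.isPreconnected⟩
  have hK0 : (0 : V) ∈ K := ConvexCone.Pointed.of_nonempty_of_isClosed ⟨_, hab⟩ hK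
  have ha_mem : a ∈ causalDiamond K a b := ⟨by simpa using hK0, hab⟩
  refine ⟨X ∪ causalDiamond K a b, ?_, Or.inl hx₀, Or.inr hz, ?_⟩
  · exact union_subset subset_diamondUnion fun w hw ↦ Or.inr ⟨a, ha, b, hb, hab, hw⟩
  · exact hX.isPreconnected.union a ha ha_mem (K.convex.causalDiamond a b).isPreconnected

end Real

theorem stmt_2_general (V : Type*) [NormedAddCommGroup V] [NormedSpace ℝ V]
    (c : Set V)
    (hconv : Convex ℝ c)
    (hcone : ∀ t : ℝ, 0 < t → ∀ v ∈ c, t • v ∈ c)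
    (X : Set V) :
    ⋂₀ {Y : Set V | X ⊆ Y ∧ ∀ x ∈ Y, ∀ y ∈ Y, y - x ∈ closure c →
        {z : V | z - x ∈ closure c ∧ y - z ∈ closure c} ⊆ Y} =
      X ∪ {z : V | ∃ x ∈ X, ∃ y ∈ X, y - x ∈ closure c ∧
        z - x ∈ closure c ∧ y - z ∈ closure c} ∧
    (IsConnected X →
      IsConnected (⋂₀ {Y : Set V | X ⊆ Y ∧ ∀ x ∈ Y, ∀ y ∈ Y, y - x ∈ closure c →
        {z : V | z - x ∈ closure c ∧ y - z ∈ closure c} ⊆ Y})) := by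
  let C : ConvexCone ℝ V :=
    { carrier := c
      smul_mem' := fun t ht v hv ↦ hcone t ht v hv
      add_mem' := fun u hu v hv ↦ by
        simpa [smul_add, smul_smul] using
          hcone 2 two_pos _ (hconv hu hv one_half_pos.le one_half_pos.le (add_halves 1)) }
  have hC : ((C.closure : ConvexCone ℝ V) : Set V) = closure c := C.coe_closure
  have hhull : causallyConvexHull (closure c) X = diamondUnion (closure c) X := by
    rw [← hC]
    exact causallyConvexHull_eq_diamondUnion fun u hu v hv ↦ C.closure.add_mem hu hv
  refine ⟨hhull, fun hX ↦ ?_⟩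
  change IsConnected (causallyConvexHull (closure c) X)
  rw [hhull, ← hC]
  exact hX.diamondUnion (hC ▸ isClosed_closure)

/-- The causally convex hull of a set `X` (the smallest causally convex set
containing `X`) equals the union of `X` with all closed diamonds between causally related
pairs of points of `X`; in particular it is connected whenever `X` is connected. -/
theorem stmt_2 (V : Type*) [NormedAddCommGroup V] [NormedSpace ℝ V]
    [FiniteDimensional ℝ V] (c : Set V)
    (hne : c.Nonempty) (hopen : IsOpen c) (hconv : Convex ℝ c)
    (hcone : ∀ t : ℝ, 0 < t → ∀ v ∈ c, t • v ∈ c)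
    (hproper : closure c ∩ (-(closure c)) = {0})
    (X : Set V) :
    ⋂₀ {Y : Set V | X ⊆ Y ∧ ∀ x ∈ Y, ∀ y ∈ Y, y - x ∈ closure c →
        {z : V | z - x ∈ closure c ∧ y - z ∈ closure c} ⊆ Y} =
      X ∪ {z : V | ∃ x ∈ X, ∃ y ∈ X, y - x ∈ closure c ∧
        z - x ∈ closure c ∧ y - z ∈ closure c} ∧
    (IsConnected X →
      IsConnected (⋂₀ {Y : Set V | X ⊆ Y ∧ ∀ x ∈ Y, ∀ y ∈ Y, y - x ∈ closure c →
        {z : V | z - x ∈ closure c ∧ y - z ∈ closure c} ⊆ Y})) :=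
  stmt_2_general V c hconv hcone X
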